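/- arXiv:1609.02369 — 4 statements merged into one kernel-verified Lean document; each statement's English description precedes it below -/
import Mathlib

section
/- Let x0 > 0, let p be a positive integer, and let A be a real-valued integrable random variable with A > p almost surely, with E[A] = ᾱ, and such that A/(A − p) is integrable. Then E[ x0^p · A/(A − p) ] ≥ x0^p · ᾱ/(ᾱ − p). Moreover, if A is not almost surely constant, the inequality is strict. -/
open MeasureTheory

/-- Stochastic tail exponent inequality: if the tail exponent `A` is random with `A > p`
a.s. and mean `ᾱ`, then the expected p-th Pareto moment `E[x0^p * A/(A-p)]` is at least
`x0^p * ᾱ/(ᾱ-p)`, with strict inequality when `A` is not almost surely constant. -/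
theorem stochastic_exponent_moment_ge {Ω : Type*} [MeasurableSpace Ω] (μ : Measure Ω)
    [IsProbabilityMeasure μ] (x0 : ℝ) (hx0 : 0 < x0) (p : ℕ) (hp : 0 < p)
    (A : Ω → ℝ) (hA : Integrable A μ) (hgt : ∀ᵐ ω ∂μ, (p : ℝ) < A ω)
    (ᾱ : ℝ) (hmean : ∫ ω, A ω ∂μ = ᾱ)
    (hint : Integrable (fun ω => A ω / (A ω - p)) μ) :
    x0 ^ p * ᾱ / (ᾱ - p) ≤ ∫ ω, x0 ^ p * A ω / (A ω - p) ∂μ ∧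
    ((¬ ∃ c : ℝ, A =ᵐ[μ] fun _ => c) →
      x0 ^ p * ᾱ / (ᾱ - p) < ∫ ω, x0 ^ p * A ω / (A ω - p) ∂μ) := by
  set c : ℝ := ᾱ / (ᾱ - p) with hc
  have hsub : Integrable (fun ω => A ω - (p:ℝ)) μ := hA.sub (integrable_const _)
  have hnn : 0 ≤ᵐ[μ] fun ω => A ω - (p:ℝ) := hgt.mono fun ω h => by simp; linarith
  have hint_sub : ∫ ω, (A ω - (p:ℝ)) ∂μ = ᾱ - p := by
    rw [integral_sub hA (integrable_const _), hmean, integral_const]; simp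
  have hαp : (p:ℝ) < ᾱ := by
    rcases eq_or_lt_of_le (integral_nonneg_of_ae hnn) with h | h
    · exfalso
      have hz := (integral_eq_zero_iff_of_nonneg_ae hnn hsub).mp h.symm
      obtain ⟨ω, h1, h2⟩ := (hgt.and hz).exists
      simp only [Pi.zero_apply] at h2; linarith
    · rw [hint_sub] at h; linarith
  have hm : (0:ℝ) < ᾱ - p := by linarith
  set k : ℝ := p / (ᾱ - p)^2 with hk
  set φ : Ω → ℝ := fun ω => A ω / (A ω - p) - c + k * (A ω - ᾱ) with hφ
  have key : ∀ a : ℝ, (p:ℝ) < a →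
      a / (a - p) - c + k * (a - ᾱ) = p * (a - ᾱ)^2 / ((a - p) * (ᾱ - p)^2) := by
    intro a ha
    have h1 : a - (p:ℝ) ≠ 0 := by linarith
    have h2 : ᾱ - (p:ℝ) ≠ 0 := ne_of_gt hm
    rw [hc, hk]; field_simp; ring
  have hφnn : 0 ≤ᵐ[μ] φ := hgt.mono fun ω h => by
    simp only [hφ, Pi.zero_apply]
    rw [key _ h]
    apply div_nonneg
    · positivity
    · have : (0:ℝ) < A ω - p := by linarith
      positivity
  have hφint : Integrable φ μ :=
    (hint.sub (integrable_const c)).add ((hA.sub (integrable_const ᾱ)).const_mul k)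
  have hIφ : ∫ ω, φ ω ∂μ = (∫ ω, A ω / (A ω - p) ∂μ) - c := by
    simp only [hφ]
    have i1 : Integrable (fun ω => A ω / (A ω - (p:ℝ)) - c) μ := hint.sub (integrable_const c)
    have i2 : Integrable (fun ω => k * (A ω - ᾱ)) μ := (hA.sub (integrable_const ᾱ)).const_mul k
    rw [integral_add i1 i2, integral_sub hint (integrable_const c), integral_const_mul,
      integral_sub hA (integrable_const ᾱ), hmean, integral_const]
    simp
  have hge : c ≤ ∫ ω, A ω / (A ω - p) ∂μ := by
    have := integral_nonneg_of_ae hφnn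
    rw [hIφ] at this; linarith
  have hx0p : (0:ℝ) < x0 ^ p := by positivity
  have hIg : ∫ ω, x0 ^ p * A ω / (A ω - p) ∂μ = x0 ^ p * ∫ ω, A ω / (A ω - p) ∂μ := by
    simp_rw [mul_div_assoc]
    exact integral_const_mul _ _
  constructor
  · rw [hIg, mul_div_assoc]
    exact mul_le_mul_of_nonneg_left hge (le_of_lt hx0p)
  · intro hnc
    have hstrict : c < ∫ ω, A ω / (A ω - p) ∂μ := by
      rcases eq_or_lt_of_le hge with h | h
      · exfalso
        have hz : ∫ ω, φ ω ∂μ = 0 := by rw [hIφ, ← h]; ring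
        have hφ0 : φ =ᵐ[μ] 0 := (integral_eq_zero_iff_of_nonneg_ae hφnn hφint).mp hz
        apply hnc
        refine ⟨ᾱ, (hgt.and hφ0).mono fun ω ⟨h1, h2⟩ => ?_⟩
        simp only [hφ, Pi.zero_apply] at h2
        rw [key _ h1] at h2
        have hD : (0:ℝ) < (A ω - p) * (ᾱ - p)^2 := by
          have : (0:ℝ) < A ω - p := by linarith
          positivity
        have hnum : (p:ℝ) * (A ω - ᾱ)^2 = 0 := by
          rcases div_eq_zero_iff.mp h2 with h' | h'
          · exact h'
          · exact absurd h' (ne_of_gt hD)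
        have hpne : (p:ℝ) ≠ 0 := by positivity
        have : (A ω - ᾱ)^2 = 0 := by
          rcases mul_eq_zero.mp hnum with h' | h'
          · exact absurd h' hpne
          · exact h'
        have := pow_eq_zero_iff (n := 2) (by norm_num) |>.mp this
        have : A ω = ᾱ := by linarith [sub_eq_zero.mp this]
        exact this
      · exact h
    rw [hIg, mul_div_assoc]
    exact mul_lt_mul_of_pos_left hstrict hx0p
end

section
/- Let λ > 0, α0 > 1 and σ > 0, and let A be a random variable such that log(A − 1) is Gaussian with mean log(α0 − 1) − σ²/2 and standard deviation σ. Then E[ λ·A/(A − 1) ] = λ·(α0 − 1 + e^{σ²})/(α0 − 1). Equivalently, if Y' denotes a Pareto variable with scale λ and stochastic tail exponent A, and Y a Pareto variable with scale λ and constant exponent α0, then E[Y'] = E[Y] + λ(e^{σ²} − 1)/(α0 − 1). -/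
open MeasureTheory ProbabilityTheory Real

/-! Writing `L = log (A - 1)`, the integrand is `λ (1 + e^{-L})`, and `E[e^{-L}]` is the
moment generating function of the Gaussian `L` at `-1`, namely `e^{σ² - log(α₀ - 1)}`. -/

lemma div_sub_one_eq_one_add_exp_neg_log {a : ℝ} (ha : 1 < a) :
    a / (a - 1) = 1 + exp (-1 * log (a - 1)) := by
  have ha' : 0 < a - 1 := sub_pos.mpr ha
  rw [neg_one_mul, exp_neg, exp_log ha']
  field_simp
  ring

lemma integrable_exp_mul_of_map_eq_gaussianReal {Ω : Type*} [MeasurableSpace Ω]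
    {P : Measure Ω} [NeZero P] {X : Ω → ℝ} {m : ℝ} {v : NNReal}
    (hX : P.map X = gaussianReal m v) (t : ℝ) :
    Integrable (fun ω ↦ exp (t * X ω)) P := by
  rw [← mgf_pos_iff, mgf_gaussianReal hX]
  exact exp_pos _

lemma integral_div_sub_one_of_map_log_sub_one_eq_gaussianReal {Ω : Type*} [MeasurableSpace Ω]
    {P : Measure Ω} [IsProbabilityMeasure P] {A : Ω → ℝ} {m : ℝ} {v : NNReal}
    (hgt : ∀ᵐ ω ∂P, 1 < A ω) (hlaw : P.map (fun ω ↦ log (A ω - 1)) = gaussianReal m v) :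
    ∫ ω, A ω / (A ω - 1) ∂P = 1 + exp (-m + v / 2) := by
  have hae : (fun ω ↦ A ω / (A ω - 1)) =ᵐ[P] fun ω ↦ 1 + exp (-1 * log (A ω - 1)) := by
    filter_upwards [hgt] with ω hω using div_sub_one_eq_one_add_exp_neg_log hω
  have hmgf : ∫ ω, exp (-1 * log (A ω - 1)) ∂P = exp (-m + v / 2) := by
    rw [← mgf, mgf_gaussianReal hlaw]
    ring_nf
  rw [integral_congr_ae hae, integral_add (integrable_const 1)
    (integrable_exp_mul_of_map_eq_gaussianReal hlaw (-1)), hmgf, integral_const, probReal_univ,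
    one_smul]

theorem lognormal_exponent_mean_general {Ω : Type*} [MeasurableSpace Ω] (P : Measure Ω)
    [IsProbabilityMeasure P] (lam α₀ σ : ℝ) (hα₀ : 1 < α₀)
    (A : Ω → ℝ) (hgt : ∀ᵐ ω ∂P, 1 < A ω)
    (hlaw : Measure.map (fun ω => Real.log (A ω - 1)) P
      = gaussianReal (Real.log (α₀ - 1) - σ ^ 2 / 2) ⟨σ ^ 2, sq_nonneg σ⟩) :
    ∫ ω, lam * A ω / (A ω - 1) ∂P
        = lam * (α₀ - 1 + Real.exp (σ ^ 2)) / (α₀ - 1) ∧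
    ∫ ω, lam * A ω / (A ω - 1) ∂P
        = lam * α₀ / (α₀ - 1) + lam * (Real.exp (σ ^ 2) - 1) / (α₀ - 1) := by
  have hα₀' : 0 < α₀ - 1 := sub_pos.mpr hα₀
  have hmean : ∫ ω, lam * A ω / (A ω - 1) ∂P = lam * (1 + exp (σ ^ 2) / (α₀ - 1)) := by
    simp_rw [mul_div_assoc]
    rw [integral_const_mul, integral_div_sub_one_of_map_log_sub_one_eq_gaussianReal hgt hlaw]
    change lam * (1 + exp (-(log (α₀ - 1) - σ ^ 2 / 2) + σ ^ 2 / 2)) = _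
    rw [show -(log (α₀ - 1) - σ ^ 2 / 2) + σ ^ 2 / 2 = σ ^ 2 - log (α₀ - 1) by ring, exp_sub,
      exp_log hα₀']
  rw [hmean]
  constructor
  · field_simp
  · field_simp
    ring

/-- Mean of a Pareto variable with shifted-lognormally distributed stochastic tail
exponent: if `log(A-1) ~ N(log(α₀-1) - σ²/2, σ²)` and `A > 1` a.s., then
`E[λ·A/(A-1)] = λ(α₀-1+e^{σ²})/(α₀-1)`, i.e. the constant-exponent mean
`λα₀/(α₀-1)` plus the bias `λ(e^{σ²}-1)/(α₀-1)`. -/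
theorem lognormal_exponent_mean {Ω : Type*} [MeasurableSpace Ω] (P : Measure Ω)
    [IsProbabilityMeasure P] (lam α₀ σ : ℝ) (hlam : 0 < lam) (hα₀ : 1 < α₀) (hσ : 0 < σ)
    (A : Ω → ℝ) (hA : Measurable A) (hgt : ∀ᵐ ω ∂P, 1 < A ω)
    (hlaw : Measure.map (fun ω => Real.log (A ω - 1)) P
      = gaussianReal (Real.log (α₀ - 1) - σ ^ 2 / 2) ⟨σ ^ 2, sq_nonneg σ⟩) :
    ∫ ω, lam * A ω / (A ω - 1) ∂P
        = lam * (α₀ - 1 + Real.exp (σ ^ 2)) / (α₀ - 1) ∧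
    ∫ ω, lam * A ω / (A ω - 1) ∂P
        = lam * α₀ / (α₀ - 1) + lam * (Real.exp (σ ^ 2) - 1) / (α₀ - 1) :=
  lognormal_exponent_mean_general P lam α₀ σ hα₀ A hgt hlaw
end

section
/- Let λ > 0, α0 > 1, and 0 < s < α0 − 1. Let A be a random variable such that A − 1 is Gamma-distributed with shape (α0 − 1)²/s² and rate (α0 − 1)/s² (so that E[A − 1] = α0 − 1 and Var(A − 1) = s²). Then E[ λ·A/(A − 1) ] = λ·α0/(α0 − 1) + λ·s²/((α0 − 1)(α0 − s − 1)(α0 + s − 1)). In particular the stochastic-exponent mean exceeds the constant-exponent mean λα0/(α0 − 1) by the strictly positive quantity λ s²/((α0 − 1)(α0 − s − 1)(α0 + s − 1)). -/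
/-!
Dividing the Gamma(k, r) density by `x` gives `r / (k - 1)` times the Gamma(k - 1, r) density,
so `E[(A - 1)⁻¹] = r / (k - 1)`. Since `A / (A - 1) = 1 + (A - 1)⁻¹`, the mean is
`λ (1 + r / (k - 1))`, and for the given shape and rate `k - 1 = (α₀ - s - 1)(α₀ + s - 1) / s²`.
-/

open MeasureTheory ProbabilityTheory Real

namespace ProbabilityTheory

variable {a r : ℝ}

lemma integrable_gammaMeasure_iff (ha : 0 < a) (hr : 0 < r) {f : ℝ → ℝ} :
    Integrable f (gammaMeasure a r) ↔ Integrable (fun x => gammaPDFReal a r x * f x) := by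
  unfold gammaMeasure gammaPDF
  rw [integrable_withDensity_iff_integrable_smul' (measurable_gammaPDFReal a r).ennreal_ofReal
    (ae_of_all _ fun _ => ENNReal.ofReal_lt_top)]
  simp only [ENNReal.toReal_ofReal (gammaPDFReal_nonneg ha hr _), smul_eq_mul]

lemma integral_gammaMeasure (ha : 0 < a) (hr : 0 < r) (f : ℝ → ℝ) :
    ∫ x, f x ∂gammaMeasure a r = ∫ x, gammaPDFReal a r x * f x := by
  unfold gammaMeasure gammaPDF
  rw [integral_withDensity_eq_integral_toReal_smul (measurable_gammaPDFReal a r).ennreal_ofReal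
    (ae_of_all _ fun _ => ENNReal.ofReal_lt_top)]
  simp only [ENNReal.toReal_ofReal (gammaPDFReal_nonneg ha hr _), smul_eq_mul]

lemma integrable_gammaPDFReal (ha : 0 < a) (hr : 0 < r) : Integrable (gammaPDFReal a r) := by
  have := isProbabilityMeasure_gammaMeasure ha hr
  simpa using (integrable_gammaMeasure_iff ha hr).1 (integrable_const (1 : ℝ))

lemma integral_gammaPDFReal_eq_one (ha : 0 < a) (hr : 0 < r) :
    ∫ x, gammaPDFReal a r x = 1 := by
  have := isProbabilityMeasure_gammaMeasure ha hr
  simpa using (integral_gammaMeasure ha hr fun _ => (1 : ℝ)).symm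

lemma gammaPDFReal_mul_inv {k x : ℝ} (hk : k ≠ 1) (hr : 0 < r) (hx : x ≠ 0) :
    gammaPDFReal k r x * x⁻¹ = r / (k - 1) * gammaPDFReal (k - 1) r x := by
  rcases hx.lt_or_gt with hx | hx
  · simp [gammaPDFReal, hx.not_ge]
  have hΓ : Gamma k = (k - 1) * Gamma (k - 1) := by
    simpa using Gamma_add_one (sub_ne_zero.2 hk)
  have hrk : r ^ k = r ^ (k - 1) * r := by rw [← rpow_add_one hr.ne', sub_add_cancel]
  simp only [gammaPDFReal, if_pos hx.le, hΓ, hrk, rpow_sub_one hx.ne' (k - 1)]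
  field_simp

lemma integrable_inv_gammaMeasure {k : ℝ} (hk : 1 < k) (hr : 0 < r) :
    Integrable (fun x => x⁻¹) (gammaMeasure k r) := by
  rw [integrable_gammaMeasure_iff (by linarith) hr]
  refine ((integrable_gammaPDFReal (sub_pos.2 hk) hr).const_mul (r / (k - 1))).congr ?_
  filter_upwards [volume.ae_ne 0] with x hx using (gammaPDFReal_mul_inv hk.ne' hr hx).symm

lemma integral_inv_gammaMeasure {k : ℝ} (hk : 1 < k) (hr : 0 < r) :
    ∫ x, x⁻¹ ∂gammaMeasure k r = r / (k - 1) := by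
  have hae : (fun x => gammaPDFReal k r x * x⁻¹) =ᵐ[volume]
      fun x => r / (k - 1) * gammaPDFReal (k - 1) r x := by
    filter_upwards [volume.ae_ne 0] with x hx using gammaPDFReal_mul_inv hk.ne' hr hx
  rw [integral_gammaMeasure (by linarith) hr, integral_congr_ae hae, integral_const_mul,
    integral_gammaPDFReal_eq_one (sub_pos.2 hk) hr, mul_one]

end ProbabilityTheory

theorem gamma_exponent_mean_general {Ω : Type*} [MeasurableSpace Ω] (P : Measure Ω)
    [IsProbabilityMeasure P] (lam α₀ s : ℝ) (hlam : 0 < lam)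
    (hs : 0 < s) (hs' : s < α₀ - 1)
    (A : Ω → ℝ) (hgt : ∀ᵐ ω ∂P, 1 < A ω)
    (hlaw : Measure.map (fun ω => A ω - 1) P
      = gammaMeasure ((α₀ - 1) ^ 2 / s ^ 2) ((α₀ - 1) / s ^ 2)) :
    ∫ ω, lam * A ω / (A ω - 1) ∂P
        = lam * α₀ / (α₀ - 1)
          + lam * s ^ 2 / ((α₀ - 1) * (α₀ - s - 1) * (α₀ + s - 1)) ∧
    0 < lam * s ^ 2 / ((α₀ - 1) * (α₀ - s - 1) * (α₀ + s - 1)) := by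
  set k := (α₀ - 1) ^ 2 / s ^ 2
  set r := (α₀ - 1) / s ^ 2
  have hd1 : 0 < α₀ - 1 := by linarith
  have hd2 : 0 < α₀ - s - 1 := by linarith
  have hd3 : 0 < α₀ + s - 1 := by linarith
  have hk : 1 < k := (one_lt_div (by positivity)).2 (by nlinarith)
  have hr : 0 < r := by positivity
  -- `Measure.map` of a non-measurable map is `0`, which a Gamma law is not.
  have hX : AEMeasurable (fun ω => A ω - 1) P :=
    .of_map_ne_zero (hlaw ▸ (isProbabilityMeasure_gammaMeasure (by linarith) hr).ne_zero)
  have hint : Integrable (fun ω => (A ω - 1)⁻¹) P :=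
    (integrable_map_measure measurable_inv.aestronglyMeasurable hX).1
      (hlaw ▸ integrable_inv_gammaMeasure hk hr)
  have hmean : ∫ ω, (A ω - 1)⁻¹ ∂P = r / (k - 1) := by
    rw [← integral_map hX measurable_inv.aestronglyMeasurable, hlaw,
      integral_inv_gammaMeasure hk hr]
  have hparam : r / (k - 1) = (α₀ - 1) / ((α₀ - s - 1) * (α₀ + s - 1)) := by
    rw [div_sub_one (by positivity), div_div_div_cancel_right₀ (by positivity)]
    ring
  have hsplit : (fun ω => lam * A ω / (A ω - 1)) =ᵐ[P] fun ω => lam + lam * (A ω - 1)⁻¹ := by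
    filter_upwards [hgt] with ω hω
    field_simp [(sub_pos.2 hω).ne']
    ring
  refine ⟨?_, by positivity⟩
  rw [integral_congr_ae hsplit, integral_add (integrable_const lam) (hint.const_mul lam),
    integral_const_mul, hmean, hparam, integral_const, probReal_univ, one_smul]
  field_simp
  ring

/-- Mean of a Pareto variable with Gamma-distributed stochastic tail exponent: if
`A - 1 ~ Gamma(shape (α₀-1)²/s², rate (α₀-1)/s²)` (so `E[A-1] = α₀-1`,
`Var(A-1) = s²`) with `0 < s < α₀ - 1` and `A > 1` a.s., then
`E[λ·A/(A-1)] = λα₀/(α₀-1) + λs²/((α₀-1)(α₀-s-1)(α₀+s-1))`,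
and that excess over the constant-exponent mean is strictly positive. -/
theorem gamma_exponent_mean {Ω : Type*} [MeasurableSpace Ω] (P : Measure Ω)
    [IsProbabilityMeasure P] (lam α₀ s : ℝ) (hlam : 0 < lam) (hα₀ : 1 < α₀)
    (hs : 0 < s) (hs' : s < α₀ - 1)
    (A : Ω → ℝ) (hA : Measurable A) (hgt : ∀ᵐ ω ∂P, 1 < A ω)
    (hlaw : Measure.map (fun ω => A ω - 1) P
      = gammaMeasure ((α₀ - 1) ^ 2 / s ^ 2) ((α₀ - 1) / s ^ 2)) :
    ∫ ω, lam * A ω / (A ω - 1) ∂P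
        = lam * α₀ / (α₀ - 1)
          + lam * s ^ 2 / ((α₀ - 1) * (α₀ - s - 1) * (α₀ + s - 1)) ∧
    0 < lam * s ^ 2 / ((α₀ - 1) * (α₀ - s - 1) * (α₀ + s - 1)) :=
  gamma_exponent_mean_general P lam α₀ s hlam hs hs' A hgt hlaw
end

section
/- Let x0 > 0, and let A be a real-valued integrable random variable with A > 1 almost surely, E[A] = ᾱ > 1, and A/(A − 1) integrable. For the left-tailed (left-asymmetric) Pareto family with support (−∞, −x0], whose member with exponent α has mean −x0·α/(α − 1), the mean under the stochastic exponent satisfies E[ −x0·A/(A − 1) ] ≤ −x0·ᾱ/(ᾱ − 1), with strict inequality if A is not almost surely constant. That is, mean-preserving stochasticity of the tail exponent decreases (makes more negative) the mean of a left-tailed power law. -/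
open MeasureTheory

lemma tangent_key (b x : ℝ) (hb : 1 < b) (hx : 1 < x) :
    x / (x - 1) - (b / (b - 1) - (x - b) / (b - 1) ^ 2)
      = (x - b) ^ 2 / ((x - 1) * (b - 1) ^ 2) := by
  have h1 : x - 1 ≠ 0 := by nlinarith
  have h2 : b - 1 ≠ 0 := by nlinarith
  field_simp
  ring

/-- For a left-tailed Pareto family (support `(-∞, -x0]`, member with exponent `α`
having mean `-x0·α/(α-1)`), a mean-preserving stochastic tail exponent `A` with mean
`ᾱ` decreases the mean: `E[-x0·A/(A-1)] ≤ -x0·ᾱ/(ᾱ-1)`, strictly when `A` is not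
almost surely constant. -/
theorem left_tailed_stochastic_exponent_mean_le {Ω : Type*} [MeasurableSpace Ω]
    (μ : Measure Ω) [IsProbabilityMeasure μ] (x0 : ℝ) (hx0 : 0 < x0)
    (A : Ω → ℝ) (hA : Integrable A μ) (hgt : ∀ᵐ ω ∂μ, 1 < A ω)
    (ᾱ : ℝ) (hᾱ : 1 < ᾱ) (hmean : ∫ ω, A ω ∂μ = ᾱ)
    (hint : Integrable (fun ω => A ω / (A ω - 1)) μ) :
    ∫ ω, -x0 * A ω / (A ω - 1) ∂μ ≤ -x0 * ᾱ / (ᾱ - 1) ∧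
    ((¬ ∃ c : ℝ, A =ᵐ[μ] fun _ => c) →
      ∫ ω, -x0 * A ω / (A ω - 1) ∂μ < -x0 * ᾱ / (ᾱ - 1)) := by
  have hᾱ1 : ᾱ - 1 ≠ 0 := by nlinarith
  set f : Ω → ℝ := fun ω => A ω / (A ω - 1) with hf
  set t : Ω → ℝ := fun ω => ᾱ / (ᾱ - 1) - (A ω - ᾱ) / (ᾱ - 1) ^ 2 with ht
  have htint : Integrable t μ :=
    (integrable_const _).sub (((hA.sub (integrable_const ᾱ)).div_const _))
  have hgint : Integrable (fun ω => f ω - t ω) μ := hint.sub htint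
  have hgae : ∀ᵐ ω ∂μ, f ω - t ω = (A ω - ᾱ) ^ 2 / ((A ω - 1) * (ᾱ - 1) ^ 2) := by
    filter_upwards [hgt] with ω hω
    exact tangent_key ᾱ (A ω) hᾱ hω
  have hgnn : ∀ᵐ ω ∂μ, 0 ≤ f ω - t ω := by
    filter_upwards [hgt, hgae] with ω hω heq
    rw [heq]
    apply div_nonneg (sq_nonneg _)
    nlinarith
  have h1 : Integrable (fun ω => (A ω - ᾱ) / (ᾱ - 1) ^ 2) μ :=
    (hA.sub (integrable_const ᾱ)).div_const _
  have h2 : Integrable (fun ω => A ω - ᾱ) μ := hA.sub (integrable_const ᾱ)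
  have hIt : ∫ ω, t ω ∂μ = ᾱ / (ᾱ - 1) := by
    rw [ht]
    rw [integral_sub (integrable_const _) h1, integral_const, integral_div,
      integral_sub hA (integrable_const ᾱ), integral_const, hmean]
    simp
  have hIg : ∫ ω, (f ω - t ω) ∂μ = ∫ ω, f ω ∂μ - ᾱ / (ᾱ - 1) := by
    rw [integral_sub hint htint, hIt]
  have hIgnn : 0 ≤ ∫ ω, (f ω - t ω) ∂μ := integral_nonneg_of_ae hgnn
  have hrw : ∀ c : ℝ, ∫ ω, -x0 * A ω / (A ω - 1) ∂μ = -x0 * ∫ ω, f ω ∂μ := by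
    intro _
    simp_rw [mul_div_assoc]
    exact integral_const_mul _ _
  have hIf : ᾱ / (ᾱ - 1) ≤ ∫ ω, f ω ∂μ := by linarith [hIg ▸ hIgnn]
  have hassoc : -x0 * ᾱ / (ᾱ - 1) = -x0 * (ᾱ / (ᾱ - 1)) := mul_div_assoc _ _ _
  constructor
  · rw [hrw 0, hassoc]
    exact mul_le_mul_of_nonpos_left hIf (by linarith)
  · intro hnc
    have hne : ∫ ω, (f ω - t ω) ∂μ ≠ 0 := by
      intro h0
      have hz : (fun ω => f ω - t ω) =ᵐ[μ] 0 :=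
        (integral_eq_zero_iff_of_nonneg_ae hgnn hgint).mp h0
      apply hnc
      refine ⟨ᾱ, ?_⟩
      filter_upwards [hgt, hgae, hz] with ω hω heq hzω
      have : (A ω - ᾱ) ^ 2 / ((A ω - 1) * (ᾱ - 1) ^ 2) = 0 := by
        rw [← heq]; exact hzω
      have hden : (A ω - 1) * (ᾱ - 1) ^ 2 ≠ 0 := by
        apply mul_ne_zero (by nlinarith) (pow_ne_zero _ hᾱ1)
      rcases div_eq_zero_iff.mp this with h | h
      · nlinarith [h]
      · exact absurd h hden
    have hpos : 0 < ∫ ω, (f ω - t ω) ∂μ := lt_of_le_of_ne hIgnn (Ne.symm hne)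
    have hIf' : ᾱ / (ᾱ - 1) < ∫ ω, f ω ∂μ := by linarith [hIg ▸ hpos]
    rw [hrw 0, hassoc]
    exact mul_lt_mul_of_neg_left hIf' (by linarith)
end
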